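/- arXiv:1212.1314 — 3 statements merged into one kernel-verified Lean document; each statement's English description precedes it below -/
import Mathlib

section
/- Let $\gamma$ be a weight with $\gamma - \beta \in W\lambda$ for $\beta$ dominant and $\lambda$ minuscule dominant. If $\gamma$ is not dominant, then there exists a simple root $\kappa$ such that $\langle \gamma, \kappa^\vee \rangle = -1$ and $\langle \beta, \kappa^\vee \rangle = 0$. -/
/-- `γ` is a dominant weight: it pairs nonnegatively with every simple coroot. -/
def Dominant {Wt I : Type*} (pair : Wt → I → ℤ) (γ : Wt) : Prop := ∀ i, 0 ≤ pair γ i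

/-- Let `γ` be a weight with `γ - β ∈ W·lam` for `β` dominant and `lam` minuscule
dominant.  If `γ` is not dominant, then there is a simple root `κ` such that
`⟨γ, κ^∨⟩ = -1` and `⟨β, κ^∨⟩ = 0`. -/
theorem stmt1 {Wt W I : Type*} [AddCommGroup Wt] [Group W] [DistribMulAction W Wt]
    (pair : Wt → I → ℤ) (α : I → Wt) (s : I → W)
    (hpair_add : ∀ γ δ : Wt, ∀ i, pair (γ + δ) i = pair γ i + pair δ i)
    (hrefl : ∀ (i : I) (v : Wt), s i • v = v - pair v i • α i)
    (γ β lam : Wt)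
    (hβ : Dominant pair β)
    (hlamdom : Dominant pair lam)
    -- `lam` is minuscule: every weight in its Weyl orbit pairs to `-1`, `0` or `1`
    (hlammin : ∀ (u : W) (i : I),
      pair (u • lam) i = -1 ∨ pair (u • lam) i = 0 ∨ pair (u • lam) i = 1)
    (horb : ∃ u : W, γ - β = u • lam)
    (hγ : ¬ Dominant pair γ) :
    ∃ κ : I, pair γ κ = -1 ∧ pair β κ = 0 := by
  simp only [Dominant, not_forall, not_le] at hγ
  obtain ⟨i, hi⟩ := hγ
  obtain ⟨u, hu⟩ := horb
  have hsplit : pair γ i = pair (γ - β) i + pair β i := by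
    have := hpair_add (γ - β) β i
    rwa [sub_add_cancel] at this
  rw [hu] at hsplit
  have hβi := hβ i
  have hmin := hlammin u i
  refine ⟨i, ?_, ?_⟩ <;> omega
end

section
/- For any non-dominant minuscule path ${\vec\gamma}$, the straightening operator $r$ strictly increases the dominance index: $\mathrm{dom}(r({\vec\gamma})) > \mathrm{dom}({\vec\gamma})$. Consequently some iterate $r^k({\vec\gamma})$ is a dominant path. -/
/-- `γ` is a minuscule path of type `lam` (of length `m`): `γ 0 = 0` and each
successive difference lies in the Weyl orbit of the minuscule weight `lam i`. -/
def IsMinusculePath {Wt : Type*} [AddCommGroup Wt] (W : Type*) [Group W]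
    [DistribMulAction W Wt] (lam : ℕ → Wt) (m : ℕ) (γ : ℕ → Wt) : Prop :=
  γ 0 = 0 ∧ ∀ i, 1 ≤ i → i ≤ m → ∃ w : W, γ i - γ (i - 1) = w • lam i

/-- One application of the straightening operator `r`:  `d` is the dominance index of
`γ` (the first place dominance fails), `w` is the minimal-length Weyl element making
`γ d` dominant, and `γ'` agrees with `γ` before `d` and is translated by
`w • γ d - γ d` from `d` on. -/
def RStep {Wt I : Type*} [AddCommGroup Wt] (W : Type*) [Group W] [DistribMulAction W Wt]
    (pair : Wt → I → ℤ) (len : W → ℕ) (m : ℕ) (γ γ' : ℕ → Wt) : Prop :=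
  ∃ (d : ℕ) (w : W), 1 ≤ d ∧ d ≤ m ∧ (∀ j < d, Dominant pair (γ j)) ∧
    ¬ Dominant pair (γ d) ∧ Dominant pair (w • γ d) ∧
    (∀ w' : W, Dominant pair (w' • γ d) → len w ≤ len w') ∧
    ∀ i, γ' i = if i < d then γ i else γ i + (w • γ d - γ d)

/-- For any non-dominant minuscule path, the straightening operator strictly increases
the dominance index; consequently some iterate of `r` is a dominant path. -/
theorem stmt7 {Wt W I : Type*} [AddCommGroup Wt] [Group W] [DistribMulAction W Wt]
    (pair : Wt → I → ℤ) (len : W → ℕ) (lam : ℕ → Wt) (m : ℕ)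
    (hlamdom : ∀ k, Dominant pair (lam k))
    (hlammin : ∀ (k : ℕ) (u : W) (i : I),
      pair (u • lam k) i = -1 ∨ pair (u • lam k) i = 0 ∨ pair (u • lam k) i = 1)
    -- every weight can be straightened by some Weyl group element
    (hex : ∀ v : Wt, ∃ w : W, Dominant pair (w • v)) :
    (∀ γ γ' : ℕ → Wt, IsMinusculePath W lam m γ →
      RStep W pair len m γ γ' →
      ∀ d d' : ℕ, ((∀ j < d, Dominant pair (γ j)) ∧ ¬ Dominant pair (γ d)) →
        ((∀ j < d', Dominant pair (γ' j)) ∧ ¬ Dominant pair (γ' d')) → d < d') ∧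
    (∀ γ : ℕ → Wt, IsMinusculePath W lam m γ →
      ∃ δ : ℕ → Wt, Relation.ReflTransGen (RStep W pair len m) γ δ ∧
        ∀ j ≤ m, Dominant pair (δ j)) := by
  classical
  have h0dom : Dominant pair (0 : Wt) := by
    obtain ⟨w, hw⟩ := hex 0
    simpa using hw
  constructor
  · rintro γ γ' hpath ⟨d₀, w, hd₀1, hd₀m, hdom₀, hnd₀, hwdom, hwmin, hγ'⟩ d d'
      ⟨hdomd, hndd⟩ ⟨hdomd', hndd'⟩
    have hdd₀ : d = d₀ := by
      by_contra h
      rcases lt_or_gt_of_ne h with h | h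
      · exact hndd (hdom₀ d h)
      · exact hnd₀ (hdomd d₀ h)
    subst hdd₀
    have hγ'dom : ∀ j ≤ d, Dominant pair (γ' j) := by
      intro j hj
      rcases lt_or_eq_of_le hj with h | h
      · rw [hγ' j, if_pos h]; exact hdomd j h
      · subst h
        rw [hγ' j, if_neg (lt_irrefl _)]
        have : γ j + (w • γ j - γ j) = w • γ j := by abel
        rw [this]; exact hwdom
    by_contra h
    push_neg at h
    exact hndd' (hγ'dom d' h)
  · intro γ hpath
    have key : ∀ (c : ℕ) (γ : ℕ → Wt), Dominant pair (γ 0) →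
        (∀ j, j + c ≤ m → Dominant pair (γ j)) →
        ∃ δ, Relation.ReflTransGen (RStep W pair len m) γ δ ∧
          ∀ j ≤ m, Dominant pair (δ j) := by
      intro c
      induction c with
      | zero => exact fun γ h0 hdom => ⟨γ, .refl, fun j hj => hdom j (by omega)⟩
      | succ c ih =>
        intro γ h0 hdom
        by_cases hall : ∀ j ≤ m, Dominant pair (γ j)
        · exact ⟨γ, .refl, hall⟩
        · push_neg at hall
          obtain ⟨j₀, hj₀m, hj₀⟩ := hall
          have hexd : ∃ d, ¬ Dominant pair (γ d) := ⟨j₀, hj₀⟩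
          set d := Nat.find hexd with hdd
          have hnd : ¬ Dominant pair (γ d) := Nat.find_spec hexd
          have hmind : ∀ j < d, Dominant pair (γ j) := by
            intro j hj
            by_contra h
            have : d ≤ j := Nat.find_le h
            omega
          have hdm : d ≤ m := le_trans (Nat.find_le hj₀) hj₀m
          have hd1 : 1 ≤ d := by
            rcases Nat.eq_zero_or_pos d with h | h
            · rw [h] at hnd; exact absurd h0 hnd
            · exact h
          have hdge : m ≤ d + c := by
            by_contra h
            exact hnd (hdom d (by omega))
          have hexw : ∃ n, ∃ w : W, Dominant pair (w • γ d) ∧ len w = n := by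
            obtain ⟨w, hw⟩ := hex (γ d); exact ⟨len w, w, hw, rfl⟩
          obtain ⟨w, hw, hwlen⟩ := Nat.find_spec hexw
          have hwmin : ∀ w' : W, Dominant pair (w' • γ d) → len w ≤ len w' := by
            intro w' hw'
            rw [hwlen]
            exact Nat.find_le ⟨w', hw', rfl⟩
          set γ'' : ℕ → Wt := fun i => if i < d then γ i else γ i + (w • γ d - γ d)
            with hγ''
          have hstep : RStep W pair len m γ γ'' :=
            ⟨d, w, hd1, hdm, hmind, hnd, hw, hwmin, fun i => rfl⟩
          have hγ''0 : Dominant pair (γ'' 0) := by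
            simp only [hγ'', if_pos (show 0 < d by omega)]; exact h0
          have hγ''dom : ∀ j, j + c ≤ m → Dominant pair (γ'' j) := by
            intro j hj
            have hjd : j ≤ d := by omega
            rcases lt_or_eq_of_le hjd with h | h
            · simp only [hγ'', if_pos h]; exact hmind j h
            · rw [h]
              simp only [hγ'', if_neg (lt_irrefl d)]
              have : γ d + (w • γ d - γ d) = w • γ d := by abel
              rw [this]; exact hw
          obtain ⟨δ, hδ1, hδ2⟩ := ih γ'' hγ''0 hγ''dom
          exact ⟨δ, .head hstep hδ1, hδ2⟩
    have h0 : Dominant pair (γ 0) := hpath.1 ▸ h0dom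
    exact key (m + 1) γ h0 (fun j hj => absurd hj (by omega))
end

section
/- In the setting of the previous statement, let $w = w_1 \otimes \cdots \otimes w_m$ be a tensor product of highest weight vectors (so $R^\ell w = w$), and let $W_k = (U\mathfrak{g}[t])_k \cdot w$ be the filtration of $W$ by the degree filtration on $U\mathfrak{g}[t]$. Then $R^\ell$ preserves each $W_k$ and acts on the quotient $W_k / W_{k-1}$ as multiplication by $\zeta^k$, where $\zeta = \eta^{\ell}$. -/
/-!
Since `X t^k` acts on the `j`-th tensor factor through the scalar `(η^j)^k`, conjugating by the
rotation `R` shifts `j` by `ℓ` and yields `R ∘ (X t^k) = ζ^k • (X t^k) ∘ R` with `ζ = η^ℓ`.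
Hence `R` multiplies a monomial of total degree `d` applied to the fixed vector `w` by `ζ^d`;
the monomials of degree `≤ k` span `W_k`, and those of degree exactly `k` are killed by
`R - ζ^k`, the rest lying in `W_{k-1}`.
-/

open scoped TensorProduct

/-- The action of a monomial `(X₁ t^{a₁}) ⋯ (X_p t^{a_p})` of the current algebra. -/
def monomialAct {g E : Type*} [AddCommGroup E] [Module ℂ E]
    (act : g → ℕ → E →ₗ[ℂ] E) : List (g × ℕ) → E →ₗ[ℂ] E
  | [] => LinearMap.id
  | p :: L => act p.1 p.2 ∘ₗ monomialAct act L

/-- The filtration `W_k = (U g[t])_k ⬝ w₀` coming from the degree filtration on the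
enveloping algebra of the current algebra: the span of all monomials of total
`t`-degree at most `k` applied to the cyclic vector `w₀`. -/
def degFil {g E : Type*} [AddCommGroup E] [Module ℂ E]
    (act : g → ℕ → E →ₗ[ℂ] E) (w₀ : E) (k : ℕ) : Submodule ℂ E :=
  Submodule.span ℂ
    {x | ∃ L : List (g × ℕ), (L.map Prod.snd).sum ≤ k ∧ x = monomialAct act L w₀}

section Filtration

variable {g E : Type*} [AddCommGroup E] [Module ℂ E] {act : g → ℕ → E →ₗ[ℂ] E}
    {w₀ : E}

theorem degFil_le_comap {k : ℕ} {f : E →ₗ[ℂ] E} {P : Submodule ℂ E}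
    (h : ∀ L : List (g × ℕ), (L.map Prod.snd).sum ≤ k → f (monomialAct act L w₀) ∈ P) :
    degFil act w₀ k ≤ P.comap f :=
  Submodule.span_le.mpr <| by
    rintro _ ⟨L, hL, rfl⟩
    exact h L hL

variable {R : E →ₗ[ℂ] E} {ζ : ℂ}

theorem map_monomialAct (hcomm : ∀ X k x, R (act X k x) = ζ ^ k • act X k (R x))
    (L : List (g × ℕ)) (x : E) :
    R (monomialAct act L x) = ζ ^ (L.map Prod.snd).sum • monomialAct act L (R x) := by
  induction L with
  | nil => simp [monomialAct]
  | cons p L ih =>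
    simp only [monomialAct, LinearMap.comp_apply, List.map_cons, List.sum_cons]
    rw [hcomm, ih, map_smul, smul_smul, ← pow_add]

theorem degFil_le_comap_of_commute (hcomm : ∀ X k x, R (act X k x) = ζ ^ k • act X k (R x))
    (hw₀ : R w₀ = w₀) (k : ℕ) : degFil act w₀ k ≤ (degFil act w₀ k).comap R :=
  degFil_le_comap fun L hL => by
    rw [map_monomialAct hcomm, hw₀]
    exact Submodule.smul_mem _ _ (Submodule.subset_span ⟨L, hL, rfl⟩)

theorem apply_eq_self_of_mem_degFil_zero
    (hcomm : ∀ X k x, R (act X k x) = ζ ^ k • act X k (R x))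
    (hw₀ : R w₀ = w₀) {x : E} (hx : x ∈ degFil act w₀ 0) : R x = x := by
  have : degFil act w₀ 0 ≤ (⊥ : Submodule ℂ E).comap (R - LinearMap.id) :=
    degFil_le_comap fun L hL => by
      rw [Submodule.mem_bot, LinearMap.sub_apply, map_monomialAct hcomm, hw₀,
        Nat.le_zero.mp hL, pow_zero, one_smul, LinearMap.id_apply, sub_self]
  simpa [sub_eq_zero] using this hx

theorem sub_smul_mem_degFil_pred
    (hcomm : ∀ X k x, R (act X k x) = ζ ^ k • act X k (R x))
    (hw₀ : R w₀ = w₀) {k : ℕ} {x : E} (hx : x ∈ degFil act w₀ k) :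
    R x - ζ ^ k • x ∈ degFil act w₀ (k - 1) := by
  have : degFil act w₀ k ≤ (degFil act w₀ (k - 1)).comap (R - ζ ^ k • LinearMap.id) :=
    degFil_le_comap fun L hL => by
      simp only [LinearMap.sub_apply, LinearMap.smul_apply, LinearMap.id_apply]
      rw [map_monomialAct hcomm, hw₀, ← sub_smul]
      rcases hL.eq_or_lt with hL | hL
      · rw [hL, sub_self, zero_smul]
        exact Submodule.zero_mem _
      · exact Submodule.smul_mem _ _ (Submodule.subset_span ⟨L, by omega, rfl⟩)
  simpa using this hx

end Filtration

section Rotation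

theorem pow_val_add_of_pow_eq_one {M : Type*} [Monoid M] {m : ℕ} [NeZero m] {η : M}
    (hη : η ^ m = 1) (a b : ZMod m) : η ^ (a + b).val = η ^ a.val * η ^ b.val := by
  rw [ZMod.val_add, ← pow_eq_pow_mod _ hη, pow_add]

theorem pow_val_natCast_of_pow_eq_one {M : Type*} [Monoid M] {m : ℕ} [NeZero m] {η : M}
    (hη : η ^ m = 1) (n : ℕ) : η ^ (n : ZMod m).val = η ^ n := by
  rw [ZMod.val_natCast, ← pow_eq_pow_mod _ hη]

theorem cast_lie {g : Type*} [LieRing g] {κ : Type*} {U : κ → Type*}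
    [∀ k, AddCommGroup (U k)] [∀ k, LieRingModule g (U k)] {a b : κ} (h : a = b)
    (X : g) (u : U a) : cast (congrArg U h) ⁅X, u⁆ = ⁅X, cast (congrArg U h) u⁆ := by
  subst h
  rfl

variable {g : Type*} [LieRing g] {κ : Type*} {U : κ → Type*}
    [∀ k, AddCommGroup (U k)] [∀ k, Module ℂ (U k)] [∀ k, LieRingModule g (U k)]
    {m ℓ : ℕ} [NeZero m] {lab : ZMod m → κ}
    (hlab : ∀ j : ZMod m, lab (j + (ℓ : ZMod m)) = lab j) {η : ℂ}

theorem rotation_apply_act (hη : η ^ m = 1)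
    (R : (⨂[ℂ] j : ZMod m, U (lab j)) →ₗ[ℂ] ⨂[ℂ] j : ZMod m, U (lab j))
    (hR : ∀ v : (j : ZMod m) → U (lab j),
      R (PiTensorProduct.tprod ℂ v)
        = PiTensorProduct.tprod ℂ
            (fun j => cast (congrArg U (hlab j)) (v (j + (ℓ : ZMod m)))))
    (act : g → ℕ → (⨂[ℂ] j : ZMod m, U (lab j)) →ₗ[ℂ] ⨂[ℂ] j : ZMod m, U (lab j))
    (hact : ∀ (X : g) (k : ℕ) (v : (j : ZMod m) → U (lab j)),
      act X k (PiTensorProduct.tprod ℂ v)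
        = ∑ j : ZMod m, ((η ^ j.val) ^ k) •
            PiTensorProduct.tprod ℂ (Function.update v j ⁅X, v j⁆))
    (X : g) (k : ℕ) (x : ⨂[ℂ] j : ZMod m, U (lab j)) :
    R (act X k x) = (η ^ ℓ) ^ k • act X k (R x) := by
  classical
  suffices R ∘ₗ act X k = (η ^ ℓ) ^ k • (act X k ∘ₗ R) from LinearMap.congr_fun this x
  refine PiTensorProduct.ext (MultilinearMap.ext fun v => ?_)
  simp only [LinearMap.compMultilinearMap_apply, LinearMap.comp_apply, LinearMap.smul_apply]
  rw [hact, map_sum, hR, hact, Finset.smul_sum,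
    ← Equiv.sum_comp (Equiv.addRight (ℓ : ZMod m))]
  refine Finset.sum_congr rfl fun j _ => ?_
  rw [Equiv.coe_addRight, map_smul, hR, smul_smul, pow_val_add_of_pow_eq_one hη,
    pow_val_natCast_of_pow_eq_one hη, mul_pow, mul_comm]
  congr 2
  funext i
  rw [Function.update_apply_of_injective _ (add_left_injective _),
    Function.apply_update (fun i => cast (congrArg U (hlab i))), cast_lie (hlab j)]

end Rotation

theorem stmt14_general {g : Type*} [LieRing g]
    {κ : Type*} (U : κ → Type*)
    [∀ k, AddCommGroup (U k)] [∀ k, Module ℂ (U k)]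
    [∀ k, LieRingModule g (U k)]
    (m ℓ : ℕ) [NeZero m] (lab : ZMod m → κ)
    (hlab : ∀ j : ZMod m, lab (j + (ℓ : ZMod m)) = lab j)
    (η : ℂ) (hη : IsPrimitiveRoot η m)
    (R : (⨂[ℂ] j : ZMod m, U (lab j)) →ₗ[ℂ] ⨂[ℂ] j : ZMod m, U (lab j))
    (hR : ∀ v : (j : ZMod m) → U (lab j),
      R (PiTensorProduct.tprod ℂ v)
        = PiTensorProduct.tprod ℂ
            (fun j => cast (congrArg U (hlab j)) (v (j + (ℓ : ZMod m)))))
    (act : g → ℕ → (⨂[ℂ] j : ZMod m, U (lab j)) →ₗ[ℂ] ⨂[ℂ] j : ZMod m, U (lab j))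
    (hact : ∀ (X : g) (k : ℕ) (v : (j : ZMod m) → U (lab j)),
      act X k (PiTensorProduct.tprod ℂ v)
        = ∑ j : ZMod m, ((η ^ j.val) ^ k) •
            PiTensorProduct.tprod ℂ (Function.update v j ⁅X, v j⁆))
    (w₀ : (j : ZMod m) → U (lab j))
    (hw₀ : R (PiTensorProduct.tprod ℂ w₀) = PiTensorProduct.tprod ℂ w₀) :
    (∀ k, ∀ x ∈ degFil act (PiTensorProduct.tprod ℂ w₀) k,
        R x ∈ degFil act (PiTensorProduct.tprod ℂ w₀) k) ∧
    (∀ x ∈ degFil act (PiTensorProduct.tprod ℂ w₀) 0, R x = x) ∧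
    (∀ k, 1 ≤ k → ∀ x ∈ degFil act (PiTensorProduct.tprod ℂ w₀) k,
        R x - ((η ^ ℓ) ^ k) • x ∈ degFil act (PiTensorProduct.tprod ℂ w₀) (k - 1)) := by
  have hcomm := rotation_apply_act hlab hη.pow_eq_one R hR act hact
  exact ⟨fun k _ hx => degFil_le_comap_of_commute hcomm hw₀ k hx,
    fun _ hx => apply_eq_self_of_mem_degFil_zero hcomm hw₀ hx,
    fun _ _ _ hx => sub_smul_mem_degFil_pred hcomm hw₀ hx⟩

/-- In the setting of the rotation of a tensor product of evaluation modules at the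
points `c_j = η^j` (with `λ_{j+ℓ} = λ_j`), let `w = w₁ ⊗ ⋯ ⊗ w_m` be a tensor product
of highest weight vectors, so that `R w = w`, and let `W_k = (U g[t])_k ⬝ w`.  Then
`R^ℓ` preserves each `W_k` and acts on `W_k / W_{k-1}` by multiplication by
`ζ^k`, where `ζ = η^ℓ`. -/
theorem stmt14 {g : Type*} [LieRing g] [LieAlgebra ℂ g]
    {κ : Type*} (U : κ → Type*)
    [∀ k, AddCommGroup (U k)] [∀ k, Module ℂ (U k)]
    [∀ k, LieRingModule g (U k)] [∀ k, LieModule ℂ g (U k)]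
    (m ℓ : ℕ) [NeZero m] (lab : ZMod m → κ)
    (hlab : ∀ j : ZMod m, lab (j + (ℓ : ZMod m)) = lab j)
    (η : ℂ) (hη : IsPrimitiveRoot η m)
    (R : (⨂[ℂ] j : ZMod m, U (lab j)) →ₗ[ℂ] ⨂[ℂ] j : ZMod m, U (lab j))
    (hR : ∀ v : (j : ZMod m) → U (lab j),
      R (PiTensorProduct.tprod ℂ v)
        = PiTensorProduct.tprod ℂ
            (fun j => cast (congrArg U (hlab j)) (v (j + (ℓ : ZMod m)))))
    (act : g → ℕ → (⨂[ℂ] j : ZMod m, U (lab j)) →ₗ[ℂ] ⨂[ℂ] j : ZMod m, U (lab j))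
    (hact : ∀ (X : g) (k : ℕ) (v : (j : ZMod m) → U (lab j)),
      act X k (PiTensorProduct.tprod ℂ v)
        = ∑ j : ZMod m, ((η ^ j.val) ^ k) •
            PiTensorProduct.tprod ℂ (Function.update v j ⁅X, v j⁆))
    (w₀ : (j : ZMod m) → U (lab j))
    (hw₀ : R (PiTensorProduct.tprod ℂ w₀) = PiTensorProduct.tprod ℂ w₀) :
    (∀ k, ∀ x ∈ degFil act (PiTensorProduct.tprod ℂ w₀) k,
        R x ∈ degFil act (PiTensorProduct.tprod ℂ w₀) k) ∧
    (∀ x ∈ degFil act (PiTensorProduct.tprod ℂ w₀) 0, R x = x) ∧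
    (∀ k, 1 ≤ k → ∀ x ∈ degFil act (PiTensorProduct.tprod ℂ w₀) k,
        R x - ((η ^ ℓ) ^ k) • x ∈ degFil act (PiTensorProduct.tprod ℂ w₀) (k - 1)) :=
  stmt14_general U m ℓ lab hlab η hη R hR act hact w₀ hw₀
end
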